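/- Let k ≥ 2 and let (T₁, …, T_k) be a commuting k-tuple of contractions on a complex Hilbert space H, and set T := T₁ ⋯ T_k (the product is independent of the ordering). Assume the defect space 𝒟_T is finite-dimensional. If there exists a permutation σ of {1, …, k} such that the factorization T = T_{σ(1)} T_{σ(2)} ⋯ T_{σ(k)} is k-regular, then for every permutation τ of {1, …, k} the factorization T = T_{τ(1)} T_{τ(2)} ⋯ T_{τ(k)} is k-regular; that is, (T₁, …, T_k) is a symmetric k-regular tuple. -/

import Mathlib

noncomputable section

open ContinuousLinearMap

/-- The defect operator `D_A = (I - A*A)^{1/2}` of a contraction `A`. -/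
def defectOp {E F : Type*} [NormedAddCommGroup E] [InnerProductSpace ℂ E]
    [CompleteSpace E] [NormedAddCommGroup F] [InnerProductSpace ℂ F] [CompleteSpace F]
    (A : E →L[ℂ] F) : E →L[ℂ] E :=
  CFC.sqrt (1 - (adjoint A).comp A)

/-- The defect space `𝒟_A`, the closure of the range of the defect operator. -/
def defectSpace {E F : Type*} [NormedAddCommGroup E] [InnerProductSpace ℂ E]
    [CompleteSpace E] [NormedAddCommGroup F] [InnerProductSpace ℂ F] [CompleteSpace F]
    (A : E →L[ℂ] F) : Submodule ℂ E :=
  (LinearMap.range (defectOp A).toLinearMap).topologicalClosure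

theorem defectOp_mem {E F : Type*} [NormedAddCommGroup E] [InnerProductSpace ℂ E]
    [CompleteSpace E] [NormedAddCommGroup F] [InnerProductSpace ℂ F] [CompleteSpace F]
    (A : E →L[ℂ] F) (x : E) : defectOp A x ∈ defectSpace A :=
  Submodule.le_topologicalClosure _ (LinearMap.mem_range_self _ x)

variable {H : ℕ → Type*} [∀ n, NormedAddCommGroup (H n)] [∀ n, InnerProductSpace ℂ (H n)]
  [∀ n, CompleteSpace (H n)]

/-- The product `A_{a+l-1} ⋯ A_{a+1} A_a : H a → H (a+l)` of a chain of operators. -/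
def prodLen (A : ∀ n, H n →L[ℂ] H (n + 1)) (a : ℕ) : ∀ l : ℕ, H a →L[ℂ] H (a + l)
  | 0 => ContinuousLinearMap.id ℂ (H a)
  | l + 1 => (A (a + l)).comp (prodLen A a l)

/-- The product `A_{b-1} ⋯ A_{a+1} A_a : H a → H b` (junk value `0` if `b < a`). -/
def prodSeg (A : ∀ n, H n →L[ℂ] H (n + 1)) (a b : ℕ) : H a →L[ℂ] H b :=
  if h : a ≤ b then (Nat.add_sub_cancel' h ▸ prodLen A a (b - a)) else 0

/-- The tuple `(D_{A_k} A_{k-1} ⋯ A_1 h, …, D_{A_2} A_1 h, D_{A_1} h)` (with zero-based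
indexing: component `i` is `D_{A i} (A_{i-1} ⋯ A_0 h)`), viewed as an element of the
Hilbert (ℓ²) direct sum of the defect spaces. -/
def defectTuple (A : ∀ n, H n →L[ℂ] H (n + 1)) (k : ℕ) (h : H 0) :
    PiLp 2 (fun i : Fin k => ↥(defectSpace (A i))) :=
  WithLp.toLp 2 (fun i => ⟨defectOp (A i) (prodSeg A 0 i h), defectOp_mem _ _⟩)

/-- The factorization `A = A_{k-1} ⋯ A_0` is `k`-regular if the set of defect tuples is dense
in the Hilbert direct sum of the defect spaces. -/
def IsRegularFactorization (A : ∀ n, H n →L[ℂ] H (n + 1)) (k : ℕ) : Prop :=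
  Dense (Set.range (defectTuple A k))

/-- A two-factor factorization `A = B ∘ C` is `2`-regular if
`{ D_B (C h) ⊕ D_C h : h }` is dense in `𝒟_B ⊕ 𝒟_C`. -/
def IsRegularPair {E F G : Type*} [NormedAddCommGroup E] [InnerProductSpace ℂ E]
    [CompleteSpace E] [NormedAddCommGroup F] [InnerProductSpace ℂ F] [CompleteSpace F]
    [NormedAddCommGroup G] [InnerProductSpace ℂ G] [CompleteSpace G]
    (B : F →L[ℂ] G) (C : E →L[ℂ] F) : Prop :=
  Dense (Set.range fun h : E =>
    ((WithLp.equiv 2 (↥(defectSpace B) × ↥(defectSpace C))).symm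
      (⟨defectOp B (C h), defectOp_mem _ _⟩, ⟨defectOp C h, defectOp_mem _ _⟩)))

end

noncomputable section
/-- The chain of operators corresponding to the ordered product
`T_{σ(1)} T_{σ(2)} ⋯ T_{σ(k)}` of a `k`-tuple of operators on a single space: the operator
applied first (index `0` in the chain) is `T_{σ(k)}`, and the one applied last is `T_{σ(1)}`. -/
def chainOf {E : Type*} [NormedAddCommGroup E] [InnerProductSpace ℂ E] [CompleteSpace E]
    {k : ℕ} (T : Fin k → (E →L[ℂ] E)) (σ : Equiv.Perm (Fin k)) : ℕ → (E →L[ℂ] E) :=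
  fun n => if h : n < k then T (σ ((⟨n, h⟩ : Fin k).rev)) else 1
end

/-!
Telescoping the identities `‖D_{A_i} x‖² = ‖x‖² - ‖A_i x‖²` along a chain of contractions shows
that the defect tuple of `h` in any ordering has norm `‖D_T h‖`, because commuting factors give
the same product `T` in every order. So every defect-tuple map has kernel `ker D_T`, and its range
is isomorphic to `ran D_T ⊆ 𝒟_T`, of some finite dimension `r`. For the regular ordering `σ` the
range is dense and finite-dimensional, hence all of `𝒟_{T_{σ(k)}} ⊕ ⋯ ⊕ 𝒟_{T_{σ(1)}}`, which
therefore has dimension `r`. Any other ordering `τ` has the same summands rearranged, so its range,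
again of dimension `r`, is the whole sum as well.
-/

open scoped InnerProduct

namespace ContinuousLinearMap

variable {E F : Type*} [NormedAddCommGroup E] [InnerProductSpace ℂ E] [CompleteSpace E]
  [NormedAddCommGroup F] [InnerProductSpace ℂ F] [CompleteSpace F]

theorem one_sub_adjoint_comp_self_nonneg {A : E →L[ℂ] F} (hA : ‖A‖ ≤ 1) :
    0 ≤ 1 - A† ∘L A := by
  have hpos : 0 ≤ A† ∘L A := (nonneg_iff_isPositive _).2 (isPositive_adjoint_comp_self A)
  rw [sub_nonneg, ← CStarAlgebra.norm_le_one_iff_of_nonneg _ hpos, norm_adjoint_comp_self]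
  nlinarith [norm_nonneg A]

theorem norm_defectOp_apply_sq {A : E →L[ℂ] F} (hA : ‖A‖ ≤ 1) (x : E) :
    ‖defectOp A x‖ ^ 2 = ‖x‖ ^ 2 - ‖A x‖ ^ 2 := by
  have hsq : defectOp A ∘L defectOp A = 1 - A† ∘L A :=
    CFC.sqrt_mul_sqrt_self _ (one_sub_adjoint_comp_self_nonneg hA)
  have hsa : (defectOp A)† = defectOp A :=
    (IsSelfAdjoint.of_nonneg (CFC.sqrt_nonneg _)).adjoint_eq
  rw [apply_norm_sq_eq_inner_adjoint_left, hsa, hsq, apply_norm_sq_eq_inner_adjoint_left A,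
    sub_apply, one_apply_eq_self, inner_sub_left, map_sub, inner_self_eq_norm_sq (𝕜 := ℂ)]

end ContinuousLinearMap

noncomputable section Chain

variable {H : ℕ → Type*} [∀ n, NormedAddCommGroup (H n)] [∀ n, InnerProductSpace ℂ (H n)]

theorem prodSeg_add (A : ∀ n, H n →L[ℂ] H (n + 1)) (a l : ℕ) :
    prodSeg A a (a + l) = prodLen A a l := by
  have cast_eq : ∀ m (hm : m = l) (e : a + m = a + l), e ▸ prodLen A a m = prodLen A a l := by
    rintro m rfl e
    rfl
  rw [prodSeg, dif_pos (Nat.le_add_right a l)]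
  exact cast_eq _ (Nat.add_sub_cancel_left a l) _

theorem prodSeg_self (A : ∀ n, H n →L[ℂ] H (n + 1)) (a : ℕ) :
    prodSeg A a a = ContinuousLinearMap.id ℂ (H a) :=
  prodSeg_add A a 0

theorem prodSeg_succ (A : ∀ n, H n →L[ℂ] H (n + 1)) {a b : ℕ} (hab : a ≤ b) :
    prodSeg A a (b + 1) = (A b).comp (prodSeg A a b) := by
  obtain ⟨l, rfl⟩ := Nat.exists_eq_add_of_le hab
  rw [prodSeg_add]
  exact prodSeg_add A a (l + 1)

theorem norm_prodSeg_zero_le_one {A : ∀ n, H n →L[ℂ] H (n + 1)} (hA : ∀ n, ‖A n‖ ≤ 1) (l : ℕ) :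
    ‖prodSeg A 0 l‖ ≤ 1 := by
  induction l with
  | zero => exact prodSeg_self A 0 ▸ ContinuousLinearMap.norm_id_le
  | succ l ih =>
    rw [prodSeg_succ A (Nat.zero_le l)]
    exact (ContinuousLinearMap.opNorm_comp_le _ _).trans (mul_le_one₀ (hA l) (norm_nonneg _) ih)

variable [∀ n, CompleteSpace (H n)]

def defectTupleₗ (A : ∀ n, H n →L[ℂ] H (n + 1)) (k : ℕ) :
    H 0 →ₗ[ℂ] PiLp 2 (fun i : Fin k => ↥(defectSpace (A i))) where
  toFun := defectTuple A k
  map_add' x y := by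
    ext i
    simp [defectTuple]
  map_smul' c x := by
    ext i
    simp [defectTuple]

theorem isRegularFactorization_iff (A : ∀ n, H n →L[ℂ] H (n + 1)) (k : ℕ) :
    IsRegularFactorization A k ↔
      Dense (LinearMap.range (defectTupleₗ A k) :
        Set (PiLp 2 fun i : Fin k => ↥(defectSpace (A i)))) := by
  rw [LinearMap.coe_range]
  rfl

theorem norm_defectTuple_sq {A : ∀ n, H n →L[ℂ] H (n + 1)} (hA : ∀ n, ‖A n‖ ≤ 1) (k : ℕ)
    (h : H 0) : ‖defectTuple A k h‖ ^ 2 = ‖h‖ ^ 2 - ‖prodSeg A 0 k h‖ ^ 2 := by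
  have step (i : ℕ) : ‖defectOp (A i) (prodSeg A 0 i h)‖ ^ 2
      = ‖prodSeg A 0 i h‖ ^ 2 - ‖prodSeg A 0 (i + 1) h‖ ^ 2 := by
    rw [ContinuousLinearMap.norm_defectOp_apply_sq (hA i), prodSeg_succ A (Nat.zero_le i)]
    rfl
  rw [PiLp.norm_sq_eq_of_L2]
  simp only [defectTuple, Submodule.coe_norm, step]
  rw [Fin.sum_univ_eq_sum_range (fun i => ‖prodSeg A 0 i h‖ ^ 2 - ‖prodSeg A 0 (i + 1) h‖ ^ 2),
    Finset.sum_range_sub', prodSeg_self]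
  rfl

end Chain

namespace LinearMap

variable {K V W W' : Type*} [DivisionRing K] [AddCommGroup V] [Module K V]
  [AddCommGroup W] [Module K W] [AddCommGroup W'] [Module K W']

noncomputable def rangeEquivOfKerEq {f : V →ₗ[K] W} {g : V →ₗ[K] W'} (h : ker f = ker g) :
    range f ≃ₗ[K] range g :=
  f.quotKerEquivRange.symm.trans ((Submodule.quotEquivOfEq _ _ h).trans g.quotKerEquivRange)

theorem range_eq_top_of_ker_eq {f : V →ₗ[K] W} {g : V →ₗ[K] W'} (h : ker f = ker g)
    (e : W ≃ₗ[K] W') [FiniteDimensional K W] (hf : range f = ⊤) : range g = ⊤ := by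
  have : FiniteDimensional K W' := e.finiteDimensional
  refine Submodule.eq_top_of_finrank_eq ?_
  rw [← (rangeEquivOfKerEq h).finrank_eq, hf, finrank_top, e.finrank_eq]

end LinearMap

theorem Submodule.eq_top_of_dense {𝕜 E : Type*} [NontriviallyNormedField 𝕜] [CompleteSpace 𝕜]
    [AddCommGroup E] [TopologicalSpace E] [IsTopologicalAddGroup E] [Module 𝕜 E]
    [ContinuousSMul 𝕜 E] [T2Space E] {p : Submodule 𝕜 E} [FiniteDimensional 𝕜 p]
    (hp : Dense (p : Set E)) : p = ⊤ :=
  (p.closed_of_finiteDimensional.submodule_topologicalClosure_eq).symm.trans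
    (Submodule.dense_iff_topologicalClosure_eq_top.1 hp)

theorem prodSeg_zero_eq_prod_ofFn {E : Type*} [NormedAddCommGroup E] [InnerProductSpace ℂ E]
    (A : ℕ → (E →L[ℂ] E)) (l : ℕ) :
    prodSeg (H := fun _ => E) A 0 l = (List.ofFn fun i : Fin l => A i.rev).prod := by
  induction l with
  | zero => exact prodSeg_self (H := fun _ => E) A 0
  | succ l ih =>
    have hsucc : (fun i : Fin l => A i.succ.rev) = fun i => A i.rev := by
      funext i
      rw [Fin.rev_succ, Fin.val_castSucc]
    rw [prodSeg_succ _ (Nat.zero_le l), ih, List.ofFn_succ, List.prod_cons, hsucc, Fin.rev_zero,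
      Fin.val_last]
    rfl

noncomputable section TupleChain

variable {E : Type*} [NormedAddCommGroup E] [InnerProductSpace ℂ E] [CompleteSpace E]
  {k : ℕ} (T : Fin k → (E →L[ℂ] E))

theorem chainOf_coe (ρ : Equiv.Perm (Fin k)) (i : Fin k) : chainOf T ρ i = T (ρ i.rev) :=
  dif_pos i.isLt

theorem norm_chainOf_le (hT : ∀ i, ‖T i‖ ≤ 1) (ρ : Equiv.Perm (Fin k)) (n : ℕ) :
    ‖chainOf T ρ n‖ ≤ 1 := by
  unfold chainOf
  split
  · exact hT _
  · exact ContinuousLinearMap.norm_id_le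

theorem prodSeg_chainOf (ρ : Equiv.Perm (Fin k)) :
    prodSeg (H := fun _ => E) (chainOf T ρ) 0 k = (List.ofFn (T ∘ ρ)).prod := by
  rw [prodSeg_zero_eq_prod_ofFn]
  simp only [chainOf_coe, Fin.rev_rev, Function.comp_def]

theorem prodSeg_chainOf_eq_of_commute (hcomm : ∀ i j, Commute (T i) (T j))
    (σ τ : Equiv.Perm (Fin k)) :
    prodSeg (H := fun _ => E) (chainOf T σ) 0 k = prodSeg (H := fun _ => E) (chainOf T τ) 0 k := by
  have hpair (ρ : Equiv.Perm (Fin k)) : (List.ofFn (T ∘ ρ)).Pairwise Commute :=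
    List.pairwise_ofFn.2 fun i j _ => hcomm _ _
  rw [prodSeg_chainOf, prodSeg_chainOf, (σ.ofFn_comp_perm T).prod_eq' (hpair σ),
    (τ.ofFn_comp_perm T).prod_eq' (hpair τ)]

theorem norm_defectTuple_chainOf (hT : ∀ i, ‖T i‖ ≤ 1) (hcomm : ∀ i j, Commute (T i) (T j))
    (ρ : Equiv.Perm (Fin k)) (h : E) :
    ‖defectTuple (H := fun _ => E) (chainOf T ρ) k h‖ =
      ‖defectOp (prodSeg (H := fun _ => E) (chainOf T (Equiv.refl (Fin k))) 0 k) h‖ := by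
  have hP := norm_prodSeg_zero_le_one (H := fun _ => E) (norm_chainOf_le T hT (Equiv.refl _)) k
  rw [← pow_left_inj₀ (norm_nonneg _) (norm_nonneg _) two_ne_zero,
    norm_defectTuple_sq (norm_chainOf_le T hT ρ), ContinuousLinearMap.norm_defectOp_apply_sq hP,
    prodSeg_chainOf_eq_of_commute T hcomm ρ (Equiv.refl _)]

theorem ker_defectTupleₗ_chainOf (hT : ∀ i, ‖T i‖ ≤ 1) (hcomm : ∀ i j, Commute (T i) (T j))
    (ρ : Equiv.Perm (Fin k)) :
    LinearMap.ker (defectTupleₗ (H := fun _ => E) (chainOf T ρ) k) =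
      LinearMap.ker (defectOp (prodSeg (H := fun _ => E) (chainOf T (Equiv.refl (Fin k))) 0 k) :
        E →ₗ[ℂ] E) := by
  ext h
  rw [LinearMap.mem_ker, LinearMap.mem_ker, ← norm_eq_zero,
    ← norm_eq_zero (a := (_ : E →ₗ[ℂ] E) h)]
  exact Eq.to_iff (congrArg (· = 0) (norm_defectTuple_chainOf T hT hcomm ρ h))

def defectSumEquiv (ρ : Equiv.Perm (Fin k)) :
    PiLp 2 (fun i : Fin k => ↥(defectSpace (chainOf T ρ i))) ≃ₗ[ℂ] ∀ j, ↥(defectSpace (T j)) :=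
  (WithLp.linearEquiv 2 ℂ _).trans <|
    (LinearEquiv.piCongrRight fun i => LinearEquiv.ofEq _ _ (by rw [chainOf_coe]; rfl)).trans
      (LinearEquiv.piCongrLeft ℂ (fun j => ↥(defectSpace (T j))) (Fin.revPerm.trans ρ))

end TupleChain

theorem statement15_general {E : Type*} [NormedAddCommGroup E] [InnerProductSpace ℂ E]
    [CompleteSpace E] (k : ℕ) (T : Fin k → (E →L[ℂ] E))
    (hcontr : ∀ i, ‖T i‖ ≤ 1) (hcomm : ∀ i j, Commute (T i) (T j))
    (hfin : FiniteDimensional ℂ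
      ↥(defectSpace (prodSeg (H := fun _ => E) (chainOf T (Equiv.refl (Fin k))) 0 k)))
    (σ : Equiv.Perm (Fin k))
    (hσ : IsRegularFactorization (H := fun _ => E) (chainOf T σ) k) :
    ∀ τ : Equiv.Perm (Fin k), IsRegularFactorization (H := fun _ => E) (chainOf T τ) k := by
  intro τ
  set D : E →ₗ[ℂ] E :=
    (defectOp (prodSeg (H := fun _ => E) (chainOf T (Equiv.refl (Fin k))) 0 k) : E →ₗ[ℂ] E)
  have hker (ρ : Equiv.Perm (Fin k)) :
      LinearMap.ker (defectTupleₗ (H := fun _ => E) (chainOf T ρ) k) = LinearMap.ker D :=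
    ker_defectTupleₗ_chainOf T hcontr hcomm ρ
  have : FiniteDimensional ℂ (LinearMap.range D) :=
    have : FiniteDimensional ℂ (LinearMap.range D).topologicalClosure := hfin
    Submodule.finiteDimensional_of_le (Submodule.le_topologicalClosure _)
  have : FiniteDimensional ℂ (LinearMap.range (defectTupleₗ (H := fun _ => E) (chainOf T σ) k)) :=
    (LinearMap.rangeEquivOfKerEq (hker σ)).symm.finiteDimensional
  have hσtop := Submodule.eq_top_of_dense ((isRegularFactorization_iff _ _).1 hσ)
  have : FiniteDimensional ℂ (PiLp 2 fun i : Fin k => ↥(defectSpace (chainOf T σ i))) :=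
    (LinearEquiv.ofTop _ hσtop).finiteDimensional
  rw [isRegularFactorization_iff, LinearMap.range_eq_top_of_ker_eq ((hker σ).trans (hker τ).symm)
    ((defectSumEquiv T σ).trans (defectSumEquiv T τ).symm) hσtop, Submodule.top_coe]
  exact dense_univ

/-- Let `(T₁, …, T_k)` be a commuting `k`-tuple of contractions on a Hilbert
space with product `T = T₁ ⋯ T_k`, and assume the defect space `𝒟_T` is finite-dimensional.
If the factorization `T = T_{σ(1)} ⋯ T_{σ(k)}` is `k`-regular for some permutation `σ`, then
it is `k`-regular for every permutation `τ`, i.e. `(T₁, …, T_k)` is a symmetric `k`-regular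
tuple. -/
theorem statement15 {E : Type*} [NormedAddCommGroup E] [InnerProductSpace ℂ E]
    [CompleteSpace E] (k : ℕ) (hk : 2 ≤ k) (T : Fin k → (E →L[ℂ] E))
    (hcontr : ∀ i, ‖T i‖ ≤ 1) (hcomm : ∀ i j, Commute (T i) (T j))
    (hfin : FiniteDimensional ℂ
      ↥(defectSpace (prodSeg (H := fun _ => E) (chainOf T (Equiv.refl (Fin k))) 0 k)))
    (σ : Equiv.Perm (Fin k))
    (hσ : IsRegularFactorization (H := fun _ => E) (chainOf T σ) k) :
    ∀ τ : Equiv.Perm (Fin k), IsRegularFactorization (H := fun _ => E) (chainOf T τ) k :=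
  statement15_general k T hcontr hcomm hfin σ hσ
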